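/- For positive semidefinite operators $A, B_1, \ldots, B_r$ on a finite-dimensional Hilbert space, the fidelity satisfies $F\big(A, \sum_{i=1}^r B_i\big) \le \sum_{i=1}^r F(A, B_i)$. -/

import Mathlib

open Matrix
open scoped ComplexOrder

/-- The positive semidefinite square root, as `Matrix.PosSemidef.sqrt` was defined in the older
Mathlib (since removed). -/
noncomputable def Matrix.PosSemidef.sqrt {n 𝕜 : Type*} [Fintype n] [DecidableEq n] [RCLike 𝕜]
    {A : Matrix n n 𝕜} (hA : A.PosSemidef) : Matrix n n 𝕜 :=
  hA.1.eigenvectorUnitary.1 * diagonal ((↑) ∘ (√·) ∘ hA.1.eigenvalues) *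
    (star hA.1.eigenvectorUnitary : Matrix n n 𝕜)

noncomputable def matAbs {m : ℕ} (A : Matrix (Fin m) (Fin m) ℂ) : Matrix (Fin m) (Fin m) ℂ :=
  (Matrix.posSemidef_conjTranspose_mul_self A).sqrt

noncomputable def traceNorm {m : ℕ} (A : Matrix (Fin m) (Fin m) ℂ) : ℝ :=
  ((matAbs A).trace).re

open Classical in
noncomputable def psdSqrt {m : ℕ} (A : Matrix (Fin m) (Fin m) ℂ) : Matrix (Fin m) (Fin m) ℂ :=
  if h : A.PosSemidef then h.sqrt else 0

noncomputable def fid {m : ℕ} (A B : Matrix (Fin m) (Fin m) ℂ) : ℝ :=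
  traceNorm (psdSqrt A * psdSqrt B)

noncomputable def matPosPart {m : ℕ} (A : Matrix (Fin m) (Fin m) ℂ) : Matrix (Fin m) (Fin m) ℂ :=
  (2⁻¹ : ℂ) • (matAbs A + A)

noncomputable def matNegPart {m : ℕ} (A : Matrix (Fin m) (Fin m) ℂ) : Matrix (Fin m) (Fin m) ℂ :=
  (2⁻¹ : ℂ) • (matAbs A - A)

/-!
Write `N i = √(B i) √A`. The trace norm is invariant under adjoints, so `F(A, B i) = ‖N i‖₁`,
and `Σ (N i)ᴴ (N i) = √A (Σ B i) √A`. As `‖M‖₁ = Tr √(Mᴴ M)` only depends on `Mᴴ M`,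
`F(A, Σ B i)` is the trace norm of the matrix stacking the `N i` on top of each other. That matrix
is the sum of the `N i` placed in pairwise disjoint blocks of rows, each of trace norm `‖N i‖₁`,
so the triangle inequality for the trace norm concludes. Both the triangle inequality and the
adjoint invariance come from the duality `‖M‖₁ = max {|Tr (V M)| : ‖V‖ ≤ 1}` (operator norm),
attained at `V = Wᴴ` for the partial isometry `W` of the polar decomposition `M = W √(Mᴴ M)`.
-/

open scoped MatrixOrder Matrix.Norms.L2Operator InnerProductSpace

namespace Matrix

section Stack

variable {ι α m n : Type*}

def stack (N : ι → Matrix m n α) : Matrix (ι × m) n α := of fun p => N p.1 p.2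

lemma stack_eq_sum_stack_single [Fintype ι] [DecidableEq ι] [AddCommMonoid α]
    (N : ι → Matrix m n α) : stack N = ∑ i, stack (Pi.single i (N i)) := by
  ext ⟨j, k⟩ l
  simp [stack, Matrix.sum_apply, Pi.single_apply, apply_ite (fun X : Matrix m n α => X k l)]

lemma conjTranspose_stack_mul_stack [Fintype ι] [Fintype m] [NonUnitalSemiring α] [StarRing α]
    (N : ι → Matrix m n α) : (stack N)ᴴ * stack N = ∑ i, (N i)ᴴ * N i := by
  ext k l
  simp [stack, mul_apply, Matrix.sum_apply, Fintype.sum_prod_type]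

lemma conjTranspose_stack_single_mul_stack_single [Fintype ι] [DecidableEq ι] [Fintype m]
    [NonUnitalSemiring α] [StarRing α] (i : ι) (X : Matrix m n α) :
    (stack (Pi.single i X))ᴴ * stack (Pi.single i X) = Xᴴ * X := by
  rw [conjTranspose_stack_mul_stack, Fintype.sum_eq_single i fun j hj => by simp [hj]]
  simp

end Stack

variable {𝕜 m n : Type*} [RCLike 𝕜] [Fintype m] [Fintype n] [DecidableEq n]

lemma conjTranspose_cfcSqrt (A : Matrix n n 𝕜) : (CFC.sqrt A)ᴴ = CFC.sqrt A :=
  (CFC.sqrt_nonneg A).isSelfAdjoint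

lemma trace_eq_sum_inner (X : Matrix n n 𝕜) (b : OrthonormalBasis n 𝕜 (EuclideanSpace 𝕜 n)) :
    X.trace = ∑ k, ⟪b k, toEuclideanLin X (b k)⟫_𝕜 := by
  rw [← LinearMap.trace_eq_sum_inner,
    LinearMap.trace_eq_matrix_trace 𝕜 (EuclideanSpace.basisFun n 𝕜).toBasis]
  congr 1
  ext i j
  simp [LinearMap.toMatrix_apply, toLpLin_apply]

lemma norm_trace_mul_le_of_posSemidef (X : Matrix n n 𝕜) {P : Matrix n n 𝕜}
    (hP : P.PosSemidef) : ‖(X * P).trace‖ ≤ ‖X‖ * RCLike.re P.trace := by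
  set b := hP.1.eigenvectorBasis
  have hXP (k : n) :
      toEuclideanLin (X * P) (b k) = hP.1.eigenvalues k • toEuclideanLin X (b k) := by
    ext1
    simp [toLpLin_apply, b, hP.1.mulVec_eigenvectorBasis]
  rw [trace_eq_sum_inner _ b, hP.1.trace_eq_sum_eigenvalues, ← RCLike.ofReal_sum,
    RCLike.ofReal_re, mul_comm ‖X‖, Finset.sum_mul]
  refine (norm_sum_le _ _).trans (Finset.sum_le_sum fun k _ => ?_)
  rw [hXP, inner_smul_right_eq_smul, norm_smul, Real.norm_of_nonneg (hP.eigenvalues_nonneg k)]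
  refine mul_le_mul_of_nonneg_left ?_ (hP.eigenvalues_nonneg k)
  calc ‖⟪b k, toEuclideanLin X (b k)⟫_𝕜‖ ≤ ‖b k‖ * ‖toEuclideanLin X (b k)‖ :=
        norm_inner_le_norm _ _
    _ ≤ ‖X‖ := by
      simpa [b.orthonormal.1 k, toLpLin_apply] using l2_opNorm_mulVec X (b k)

/-- `cfc (·⁻¹) P` is the Moore–Penrose pseudo-inverse of `P`, thanks to `(0 : ℝ)⁻¹ = 0`. -/
lemma mul_cfc_inv_mul_self {P : Matrix n n 𝕜} (hP : IsSelfAdjoint P) :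
    P * cfc (·⁻¹ : ℝ → ℝ) P * P = P := by
  have hcont (f : ℝ → ℝ) : ContinuousOn f (spectrum ℝ P) := P.finite_real_spectrum.continuousOn f
  calc P * cfc (·⁻¹ : ℝ → ℝ) P * P
      = cfc (fun x : ℝ => x) P * cfc (·⁻¹ : ℝ → ℝ) P * cfc (fun x : ℝ => x) P := by
        rw [cfc_id' ℝ P]
    _ = cfc (fun x : ℝ => x * x⁻¹ * x) P := by
        rw [cfc_mul _ _ P (hcont _) (hcont _), cfc_mul _ _ P (hcont _) (hcont _)]
    _ = P := by
        rw [cfc_congr (g := fun x : ℝ => x) fun x _ => ?_, cfc_id' ℝ P]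
        rcases eq_or_ne x 0 with rfl | hx
        · simp
        · field_simp

lemma norm_le_one_of_isIdempotentElem_conjTranspose_mul_self {W : Matrix m n 𝕜}
    (h : IsIdempotentElem (Wᴴ * W)) : ‖W‖ ≤ 1 := by
  have hS : ‖Wᴴ * W‖ = ‖Wᴴ * W‖ * ‖Wᴴ * W‖ := calc
    ‖Wᴴ * W‖ = ‖(Wᴴ * W)ᴴ * (Wᴴ * W)‖ := by
      rw [conjTranspose_mul, conjTranspose_conjTranspose, h.eq]
    _ = _ := l2_opNorm_conjTranspose_mul_self _
  rw [l2_opNorm_conjTranspose_mul_self] at hS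
  have h1 : ‖W‖ * ‖W‖ ≤ 1 := by nlinarith [mul_self_nonneg ‖W‖]
  nlinarith [norm_nonneg W]

lemma exists_polar_decomposition (M : Matrix m n 𝕜) :
    ∃ W : Matrix m n 𝕜, ‖W‖ ≤ 1 ∧ W * CFC.sqrt (Mᴴ * M) = M ∧
      Wᴴ * M = CFC.sqrt (Mᴴ * M) := by
  set P := CFC.sqrt (Mᴴ * M)
  set Q := cfc (·⁻¹ : ℝ → ℝ) P
  have hP : Pᴴ = P := conjTranspose_cfcSqrt _
  have hQ : Qᴴ = Q := IsSelfAdjoint.cfc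
  have hPP : Mᴴ * M = P * P :=
    (CFC.sqrt_mul_sqrt_self _ (posSemidef_conjTranspose_mul_self M).nonneg).symm
  have hPQP : P * Q * P = P := mul_cfc_inv_mul_self hP
  have hQP : Q * P = P * Q := by
    have h := cfc_commute_cfc (R := ℝ) (fun x => x) (·⁻¹) P
    rw [cfc_id' ℝ P] at h
    exact h.eq.symm
  have hWM : (M * Q)ᴴ * M = P := by
    rw [conjTranspose_mul, hQ, Matrix.mul_assoc, hPP, ← Matrix.mul_assoc, hQP, hPQP]
  have hMW : Mᴴ * (M * Q) = P := by
    rw [← Matrix.mul_assoc, hPP, Matrix.mul_assoc, ← hQP, ← Matrix.mul_assoc, hPQP]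
  have hWW : (M * Q)ᴴ * (M * Q) = P * Q := by rw [← Matrix.mul_assoc, hWM]
  refine ⟨M * Q, ?_, ?_, hWM⟩
  · apply norm_le_one_of_isIdempotentElem_conjTranspose_mul_self
    rw [hWW, IsIdempotentElem, ← Matrix.mul_assoc, hPQP]
  · have hWP : (M * Q * P)ᴴ = P * (M * Q)ᴴ := by rw [conjTranspose_mul, hP]
    rw [← sub_eq_zero, ← conjTranspose_mul_self_eq_zero]
    calc (M * Q * P - M)ᴴ * (M * Q * P - M)
        = P * ((M * Q)ᴴ * (M * Q)) * P - P * ((M * Q)ᴴ * M) - Mᴴ * (M * Q) * P + Mᴴ * M := by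
          rw [conjTranspose_sub, hWP]
          simp only [Matrix.sub_mul, Matrix.mul_sub, Matrix.mul_assoc]
          abel
      _ = 0 := by
          rw [hWW, hWM, hMW, hPP, Matrix.mul_assoc P, hPQP]
          abel

/-- The trace norm `‖M‖₁`. -/
noncomputable def nuclearNorm (M : Matrix m n 𝕜) : ℝ := RCLike.re (CFC.sqrt (Mᴴ * M)).trace

lemma nuclearNorm_nonneg (M : Matrix m n 𝕜) : 0 ≤ M.nuclearNorm :=
  (RCLike.nonneg_iff.mp (CFC.sqrt_nonneg (Mᴴ * M)).posSemidef.trace_nonneg).1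

lemma nuclearNorm_eq_of_conjTranspose_mul_self_eq {l : Type*} [Fintype l] {M : Matrix m n 𝕜}
    {N : Matrix l n 𝕜} (h : Mᴴ * M = Nᴴ * N) : M.nuclearNorm = N.nuclearNorm := by
  rw [nuclearNorm, nuclearNorm, h]

lemma norm_trace_mul_le_nuclearNorm [DecidableEq m] (V : Matrix n m 𝕜) (M : Matrix m n 𝕜) :
    ‖(V * M).trace‖ ≤ ‖V‖ * M.nuclearNorm := by
  obtain ⟨W, hW, hWP, -⟩ := exists_polar_decomposition M
  calc ‖(V * M).trace‖ = ‖(V * W * CFC.sqrt (Mᴴ * M)).trace‖ := by rw [Matrix.mul_assoc, hWP]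
    _ ≤ ‖V * W‖ * M.nuclearNorm :=
        norm_trace_mul_le_of_posSemidef _ (CFC.sqrt_nonneg _).posSemidef
    _ ≤ ‖V‖ * M.nuclearNorm := by
        refine mul_le_mul_of_nonneg_right ((l2_opNorm_mul V W).trans ?_) (nuclearNorm_nonneg M)
        simpa using mul_le_mul_of_nonneg_left hW (norm_nonneg V)

lemma exists_trace_mul_eq_nuclearNorm [DecidableEq m] (M : Matrix m n 𝕜) :
    ∃ V : Matrix n m 𝕜, ‖V‖ ≤ 1 ∧ (V * M).trace = M.nuclearNorm := by
  obtain ⟨W, hW, -, hWM⟩ := exists_polar_decomposition M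
  refine ⟨Wᴴ, (l2_opNorm_conjTranspose W).trans_le hW, ?_⟩
  rw [hWM, nuclearNorm]
  refine (RCLike.conj_eq_iff_re.mp ?_).symm
  rw [← RCLike.star_def, ← trace_conjTranspose, conjTranspose_cfcSqrt]

lemma nuclearNorm_sum_le [DecidableEq m] {ι : Type*} (s : Finset ι) (M : ι → Matrix m n 𝕜) :
    (∑ i ∈ s, M i).nuclearNorm ≤ ∑ i ∈ s, (M i).nuclearNorm := by
  obtain ⟨V, hV, hVM⟩ := exists_trace_mul_eq_nuclearNorm (∑ i ∈ s, M i)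
  rw [← RCLike.ofReal_re (K := 𝕜) (nuclearNorm _), ← hVM, Matrix.mul_sum, trace_sum,
    map_sum]
  refine Finset.sum_le_sum fun i _ => (RCLike.re_le_norm _).trans ?_
  exact (norm_trace_mul_le_nuclearNorm V (M i)).trans
    (mul_le_of_le_one_left (nuclearNorm_nonneg _) hV)

lemma nuclearNorm_conjTranspose_le [DecidableEq m] (M : Matrix m n 𝕜) :
    Mᴴ.nuclearNorm ≤ M.nuclearNorm := by
  obtain ⟨V, hV, hVM⟩ := exists_trace_mul_eq_nuclearNorm Mᴴ
  have hnorm : ‖(Vᴴ * M).trace‖ = Mᴴ.nuclearNorm := by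
    rw [← norm_star, ← trace_conjTranspose, conjTranspose_mul, conjTranspose_conjTranspose,
      trace_mul_comm, hVM, RCLike.norm_ofReal, abs_of_nonneg (nuclearNorm_nonneg _)]
  rw [← hnorm]
  exact (norm_trace_mul_le_nuclearNorm Vᴴ M).trans
    (mul_le_of_le_one_left (nuclearNorm_nonneg _) ((l2_opNorm_conjTranspose V).trans_le hV))

lemma nuclearNorm_conjTranspose [DecidableEq m] (M : Matrix m n 𝕜) :
    Mᴴ.nuclearNorm = M.nuclearNorm :=
  (nuclearNorm_conjTranspose_le M).antisymm (by simpa using nuclearNorm_conjTranspose_le Mᴴ)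

lemma conjTranspose_sqrt_mul_mul_self {l : Type*} {B : Matrix n n 𝕜} (hB : B.PosSemidef)
    (X : Matrix n l 𝕜) :
    (CFC.sqrt B * X)ᴴ * (CFC.sqrt B * X) = Xᴴ * B * X := by
  rw [conjTranspose_mul, conjTranspose_cfcSqrt, Matrix.mul_assoc,
    ← Matrix.mul_assoc (CFC.sqrt B), CFC.sqrt_mul_sqrt_self B hB.nonneg, Matrix.mul_assoc]

end Matrix

lemma Matrix.PosSemidef.sqrt_eq_cfcSqrt {𝕜 n : Type*} [RCLike 𝕜] [Fintype n] [DecidableEq n]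
    {A : Matrix n n 𝕜} (hA : A.PosSemidef) : hA.sqrt = CFC.sqrt A := by
  rw [CFC.sqrt_eq_cfc, cfc_nnreal_eq_real _ A, hA.1.cfc_eq]
  unfold Matrix.PosSemidef.sqrt IsHermitian.cfc
  rw [Unitary.conjStarAlgAut_apply]
  congr 3
  funext i
  simp [max_eq_left (hA.eigenvalues_nonneg i)]

lemma psdSqrt_eq_cfcSqrt {d : ℕ} {A : Matrix (Fin d) (Fin d) ℂ} (hA : A.PosSemidef) :
    psdSqrt A = CFC.sqrt A := by
  rw [psdSqrt, dif_pos hA, hA.sqrt_eq_cfcSqrt]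

lemma traceNorm_eq_nuclearNorm {d : ℕ} (M : Matrix (Fin d) (Fin d) ℂ) :
    traceNorm M = M.nuclearNorm := by
  rw [traceNorm, matAbs, PosSemidef.sqrt_eq_cfcSqrt, nuclearNorm]
  rfl

lemma fid_eq_nuclearNorm {d : ℕ} {A B : Matrix (Fin d) (Fin d) ℂ} (hA : A.PosSemidef)
    (hB : B.PosSemidef) : fid A B = (CFC.sqrt B * CFC.sqrt A).nuclearNorm := by
  rw [fid, psdSqrt_eq_cfcSqrt hA, psdSqrt_eq_cfcSqrt hB, traceNorm_eq_nuclearNorm,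
    ← nuclearNorm_conjTranspose, conjTranspose_mul, conjTranspose_cfcSqrt, conjTranspose_cfcSqrt]

theorem fidelity_subadditive {d r : ℕ} (A : Matrix (Fin d) (Fin d) ℂ)
    (B : Fin r → Matrix (Fin d) (Fin d) ℂ)
    (hA : A.PosSemidef) (hB : ∀ i, (B i).PosSemidef) :
    fid A (∑ i, B i) ≤ ∑ i, fid A (B i) := by
  set a := CFC.sqrt A
  set N := fun i => CFC.sqrt (B i) * a
  have hS : (∑ i, B i).PosSemidef := posSemidef_sum _ fun i _ => hB i
  have hsum : fid A (∑ i, B i) = (stack N).nuclearNorm := by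
    rw [fid_eq_nuclearNorm hA hS]
    refine nuclearNorm_eq_of_conjTranspose_mul_self_eq ?_
    rw [conjTranspose_sqrt_mul_mul_self hS, conjTranspose_stack_mul_stack, Matrix.mul_sum,
      Matrix.sum_mul]
    exact Finset.sum_congr rfl fun i _ => (conjTranspose_sqrt_mul_mul_self (hB i) a).symm
  have hterm (i : Fin r) : (stack (Pi.single i (N i))).nuclearNorm = fid A (B i) := by
    rw [fid_eq_nuclearNorm hA (hB i)]
    exact nuclearNorm_eq_of_conjTranspose_mul_self_eq
      (conjTranspose_stack_single_mul_stack_single i (N i))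
  calc fid A (∑ i, B i) = (∑ i, stack (Pi.single i (N i))).nuclearNorm := by
        rw [hsum, ← stack_eq_sum_stack_single]
    _ ≤ ∑ i, (stack (Pi.single i (N i))).nuclearNorm := nuclearNorm_sum_le _ _
    _ = ∑ i, fid A (B i) := Finset.sum_congr rfl fun i _ => hterm i
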